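/- arXiv:1611.04539 — 8 statements merged into one kernel-verified Lean document; each statement's English description precedes it below -/
import Mathlib

section
/- Let a and b be coprime nonzero integers and let d > 1 be an odd integer with gcd(d, ab) = 1. Then d ∈ G_{(a,b)} if and only if there exists an integer s ≥ 1 such that 2^s || ord_p(a/b) for every prime p dividing d. -/
/-!
Write `x = a b⁻¹`. Modulo an odd prime `p`, `p ∣ a^k + b^k` means `x^k = -1`, i.e. `ord_p x`
divides `2k` but not `k`, i.e. `ord_p x = 2^(v+1)·(an odd divisor of w)` where `k = 2^v w` with
`w` odd. This gives the forward direction with `s = v + 1`.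

Conversely, if every `ord_p x` has `2`-adic valuation exactly `s`, then
`k₀ = 2^(s-1)·∏ (odd part of ord_p x)` satisfies `p ∣ a^k₀ + b^k₀` for all `p ∣ d`, so
`r = ∏ p` divides `a^k₀ + b^k₀`. As `r` is odd, raising to the `r^d`-th power lifts this to
`r^(d+1) ∣ a^(k₀ r^d) + b^(k₀ r^d)`, and `d ∣ r^d`.
-/

/-- `d ∈ G_{(a,b)}`: the positive integer `d` divides `a^k + b^k` for some integer `k ≥ 1`. -/
def Good (a b : ℤ) (d : ℕ) : Prop := ∃ k : ℕ, 1 ≤ k ∧ (d : ℤ) ∣ a ^ k + b ^ k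

/-- `ord_n(a/b)`: the multiplicative order of `a·b⁻¹` modulo `n`. -/
noncomputable def ordAB (a b : ℤ) (n : ℕ) : ℕ :=
  orderOf ((a : ZMod n) * (b : ZMod n)⁻¹)

namespace Nat

theorem not_two_pow_succ_dvd_two_pow_mul {v w : ℕ} (hw : Odd w) :
    ¬ 2 ^ (v + 1) ∣ 2 ^ v * w := by
  rw [pow_succ, Nat.mul_dvd_mul_iff_left (by positivity)]
  exact hw.not_two_dvd_nat

theorem odd_div_two_pow {n s : ℕ} (h : 2 ^ s ∣ n) (h' : ¬ 2 ^ (s + 1) ∣ n) :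
    Odd (n / 2 ^ s) := by
  rw [← Nat.not_even_iff_odd]
  rintro ⟨c, hc⟩
  apply h'
  rw [← Nat.mul_div_cancel' h, hc, pow_succ]
  exact ⟨c, by ring⟩

theorem dvd_two_mul_and_not_dvd_iff {n v w : ℕ} (hw : Odd w) :
    (n ∣ 2 * (2 ^ v * w) ∧ ¬ n ∣ 2 ^ v * w) ↔
      (2 ^ (v + 1) ∣ n ∧ ¬ 2 ^ (v + 1 + 1) ∣ n ∧ n ∣ 2 ^ (v + 1) * w) := by
  have h2k : 2 * (2 ^ v * w) = 2 ^ (v + 1) * w := by ring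
  rw [h2k]
  constructor
  · rintro ⟨hn, hnk⟩
    refine ⟨?_, fun h => not_two_pow_succ_dvd_two_pow_mul hw (h.trans hn), hn⟩
    have hn0 : n ≠ 0 := by
      rintro rfl
      simp [hw.pos.ne'] at hn
    obtain ⟨t, m, hm, rfl⟩ := exists_eq_two_pow_mul_odd hn0
    have hmw : m ∣ w :=
      (hm.coprime_two_right.pow_right _).dvd_of_dvd_mul_left (dvd_of_mul_left_dvd hn)
    by_contra ht
    have htv : t ≤ v := by
      by_contra! hvt
      exact ht ((pow_dvd_pow 2 hvt).trans (dvd_mul_right _ _))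
    exact hnk (mul_dvd_mul (pow_dvd_pow 2 htv) hmw)
  · rintro ⟨hn, -, hnk⟩
    exact ⟨hnk, fun h => not_two_pow_succ_dvd_two_pow_mul hw (hn.trans h)⟩

theorem exists_odd_forall_dvd_two_mul_and_not_dvd {ι : Type*} (S : Finset ι) (n : ι → ℕ) {v : ℕ}
    (h : ∀ i ∈ S, 2 ^ (v + 1) ∣ n i ∧ ¬ 2 ^ (v + 1 + 1) ∣ n i) :
    ∃ O, Odd O ∧ ∀ i ∈ S, n i ∣ 2 * (2 ^ v * O) ∧ ¬ n i ∣ 2 ^ v * O := by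
  have hO : Odd (∏ i ∈ S, n i / 2 ^ (v + 1)) :=
    Finset.prod_induction _ Odd (fun _ _ => Odd.mul) odd_one fun i hi =>
      odd_div_two_pow (h i hi).1 (h i hi).2
  refine ⟨_, hO, fun i hi => (dvd_two_mul_and_not_dvd_iff hO).2 ⟨(h i hi).1, (h i hi).2, ?_⟩⟩
  rw [← Nat.mul_div_cancel' (h i hi).1]
  exact mul_dvd_mul_left _ (Finset.dvd_prod_of_mem _ hi)

end Nat

theorem pow_eq_neg_one_iff_orderOf_dvd {R : Type*} [Ring R] [NoZeroDivisors R]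
    (hR : (-1 : R) ≠ 1) {x : R} {k : ℕ} :
    x ^ k = -1 ↔ orderOf x ∣ 2 * k ∧ ¬ orderOf x ∣ k := by
  rw [orderOf_dvd_iff_pow_eq_one, orderOf_dvd_iff_pow_eq_one, mul_comm, pow_mul, sq_eq_one_iff]
  constructor
  · intro h
    simp [h, hR]
  · rintro ⟨h | h, h'⟩
    exacts [absurd h h', h]

theorem dvd_add_pow_of_dvd_add {R : Type*} [CommRing R] {r : ℕ} (hr : Odd r) {u v : R}
    (h : (r : R) ∣ u + v) (j : ℕ) : (r : R) ^ (j + 1) ∣ u ^ r ^ j + v ^ r ^ j := by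
  have := dvd_sub_pow_of_dvd_sub (a := u) (b := -v) (by rwa [sub_neg_eq_add]) j
  rwa [hr.pow.neg_pow, sub_neg_eq_add] at this

theorem ZMod.isUnit_intCast_of_isCoprime {n : ℕ} {b : ℤ} (h : IsCoprime (n : ℤ) b) :
    IsUnit (b : ZMod n) := by
  obtain ⟨u, v, huv⟩ := h
  refine IsUnit.of_mul_eq_one (v : ZMod n) ?_
  simpa [mul_comm] using congrArg (Int.cast : ℤ → ZMod n) huv

theorem ZMod.natCast_dvd_pow_add_pow_iff {n : ℕ} {a b : ℤ} (hb : IsUnit (b : ZMod n))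
    (k : ℕ) :
    (n : ℤ) ∣ a ^ k + b ^ k ↔ ((a : ZMod n) * (b : ZMod n)⁻¹) ^ k = -1 := by
  rw [← ZMod.intCast_zmod_eq_zero_iff_dvd, Int.cast_add, Int.cast_pow, Int.cast_pow,
    ← eq_neg_iff_add_eq_zero]
  conv_rhs => rw [← (hb.pow k).mul_left_inj, neg_one_mul, mul_pow, mul_assoc, ← mul_pow,
    ZMod.inv_mul_of_unit _ hb, one_pow, mul_one]

theorem prime_dvd_pow_add_pow_iff {p : ℕ} (hp : p.Prime) (hp2 : p ≠ 2) {a b : ℤ}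
    (hb : IsCoprime (p : ℤ) b) (k : ℕ) :
    (p : ℤ) ∣ a ^ k + b ^ k ↔ ordAB a b p ∣ 2 * k ∧ ¬ ordAB a b p ∣ k := by
  have := Fact.mk hp
  have : Fact (2 < p) := ⟨hp.two_le.lt_of_ne' hp2⟩
  rw [ZMod.natCast_dvd_pow_add_pow_iff (ZMod.isUnit_intCast_of_isCoprime hb),
    pow_eq_neg_one_iff_orderOf_dvd ZMod.neg_one_ne_one, ordAB]

theorem dvd_pow_add_pow_of_forall_prime_dvd {d : ℕ} (hd : Odd d) {u v : ℤ}
    (h : ∀ p ∈ d.primeFactors, (p : ℤ) ∣ u + v) :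
    (d : ℤ) ∣ u ^ (∏ p ∈ d.primeFactors, p) ^ d + v ^ (∏ p ∈ d.primeFactors, p) ^ d := by
  have hr : Odd (∏ p ∈ d.primeFactors, p) := hd.of_dvd_nat (Nat.prod_primeFactors_dvd d)
  have hru : ((∏ p ∈ d.primeFactors, p : ℕ) : ℤ) ∣ u + v :=
    Int.natCast_dvd.2 <| Finset.prod_primes_dvd _
      (fun p hp => (Nat.prime_of_mem_primeFactors hp).prime) fun p hp => Int.natCast_dvd.1 (h p hp)
  have hdr : (d : ℤ) ∣ ((∏ p ∈ d.primeFactors, p : ℕ) : ℤ) ^ (d + 1) := by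
    exact_mod_cast (Nat.dvd_prod_primeFactors_pow_self hd.pos.ne').trans
      (Nat.pow_dvd_pow _ d.le_succ)
  exact hdr.trans (dvd_add_pow_of_dvd_add hr hru d)

theorem good_odd_iff_general (a b : ℤ) (d : ℕ) (hdodd : Odd d) (hdab : IsCoprime (d : ℤ) (a * b)) :
    Good a b d ↔ ∃ s : ℕ, 1 ≤ s ∧ ∀ p : ℕ, p.Prime → p ∣ d →
      2 ^ s ∣ ordAB a b p ∧ ¬ 2 ^ (s + 1) ∣ ordAB a b p := by
  have key : ∀ p, p.Prime → p ∣ d → ∀ k, (p : ℤ) ∣ a ^ k + b ^ k ↔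
      ordAB a b p ∣ 2 * k ∧ ¬ ordAB a b p ∣ k := fun p hp hpd =>
    prime_dvd_pow_add_pow_iff hp (by rintro rfl; exact hdodd.not_two_dvd_nat hpd)
      (hdab.of_isCoprime_of_dvd_left (Int.natCast_dvd_natCast.2 hpd)).of_mul_right_right
  constructor
  · rintro ⟨k, hk, hdk⟩
    obtain ⟨v, w, hw, rfl⟩ := Nat.exists_eq_two_pow_mul_odd (by omega : k ≠ 0)
    refine ⟨v + 1, by omega, fun p hp hpd => ?_⟩
    obtain ⟨h, h', -⟩ := (Nat.dvd_two_mul_and_not_dvd_iff hw).1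
      ((key p hp hpd _).1 ((Int.natCast_dvd_natCast.2 hpd).trans hdk))
    exact ⟨h, h'⟩
  · rintro ⟨s, hs, hord⟩
    obtain ⟨v, rfl⟩ : ∃ v, s = v + 1 := ⟨s - 1, by omega⟩
    have hmem (p) (hp : p ∈ d.primeFactors) : p.Prime ∧ p ∣ d :=
      ⟨Nat.prime_of_mem_primeFactors hp, Nat.dvd_of_mem_primeFactors hp⟩
    obtain ⟨O, hO, hdvd⟩ := Nat.exists_odd_forall_dvd_two_mul_and_not_dvd d.primeFactors
      (ordAB a b) fun p hp => hord p (hmem p hp).1 (hmem p hp).2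
    have hpk : ∀ p ∈ d.primeFactors, (p : ℤ) ∣ a ^ (2 ^ v * O) + b ^ (2 ^ v * O) := fun p hp =>
      (key p (hmem p hp).1 (hmem p hp).2 _).2 (hdvd p hp)
    refine ⟨2 ^ v * O * (∏ p ∈ d.primeFactors, p) ^ d, ?_, ?_⟩
    · exact Nat.mul_pos (Nat.mul_pos (by positivity) hO.pos)
        (pow_pos (Nat.pos_of_dvd_of_pos (Nat.prod_primeFactors_dvd d) hdodd.pos) d)
    · simpa only [pow_mul] using dvd_pow_add_pow_of_forall_prime_dvd hdodd hpk

theorem good_odd_iff (a b : ℤ) (ha : a ≠ 0) (hb : b ≠ 0) (hab : IsCoprime a b)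
    (d : ℕ) (hd : 1 < d) (hdodd : Odd d) (hdab : IsCoprime (d : ℤ) (a * b)) :
    Good a b d ↔ ∃ s : ℕ, 1 ≤ s ∧ ∀ p : ℕ, p.Prime → p ∣ d →
      2 ^ s ∣ ordAB a b p ∧ ¬ 2 ^ (s + 1) ∣ ordAB a b p :=
  good_odd_iff_general a b d hdodd hdab
end

section
/- Let a, b and d > 1 be pairwise coprime odd integers with a, b nonzero. Then d ∈ G_{(a,b)} if and only if 2d ∈ G_{(a,b)}. Moreover, if d ∈ G_{(a,b)}, then ord_{2d}(a/b) = ord_d(a/b) and this common value is even. -/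
/-!
Since `a` and `b` are odd, both `a^k + b^k` and `a^k - b^k` are even, so for odd `d` they are
divisible by `d` exactly when they are divisible by `2d`. Divisibility of `a^k + b^k` is the
definition of goodness, and divisibility of `a^k - b^k` says that `(a/b)^k = 1`, which pins down
the order. Finally, `d ∣ a^k + b^k` means `(a/b)^k = -1 ≠ 1` modulo `d > 2`, while `(a/b)^(2k) = 1`,
so the order divides `2k` but not `k` and is therefore even.
-/

lemma pow_mul_eq_iff_of_mul_eq_one {M : Type*} [CommMonoid M] {w y : M} (h : w * y = 1)
    (x c : M) (k : ℕ) : (x * w) ^ k = c ↔ x ^ k = c * y ^ k := by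
  have hy : IsUnit (y ^ k) := (IsUnit.of_mul_eq_one_right w h).pow k
  rw [← hy.mul_left_inj, ← mul_pow, mul_assoc, h, mul_one]

lemma ZMod.intCast_mul_inv_pow_eq_intCast_iff {n : ℕ} {b : ℤ} (hb : IsCoprime b n)
    (a c : ℤ) (k : ℕ) :
    ((a : ZMod n) * (b : ZMod n)⁻¹) ^ k = c ↔ (n : ℤ) ∣ a ^ k - c * b ^ k := by
  rw [pow_mul_eq_iff_of_mul_eq_one (ZMod.coe_int_inv_mul_eq_one hb), ← sub_eq_zero,
    ← ZMod.intCast_zmod_eq_zero_iff_dvd]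
  push_cast
  rfl

lemma even_orderOf_of_pow_eq_neg_one {M : Type*} [Monoid M] [HasDistribNeg M]
    (hM : (-1 : M) ≠ 1) {x : M} {k : ℕ} (hx : x ^ k = -1) : Even (orderOf x) := by
  have hdvd_two_mul : orderOf x ∣ 2 * k := by
    rw [orderOf_dvd_iff_pow_eq_one, mul_comm, pow_mul, hx, neg_one_sq]
  have hndvd : ¬ orderOf x ∣ k := by
    rwa [orderOf_dvd_iff_pow_eq_one, hx]
  by_contra hodd
  exact hndvd ((Nat.coprime_two_right.2 (Nat.not_even_iff_odd.1 hodd)).dvd_of_dvd_mul_left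
    hdvd_two_mul)

lemma Int.two_mul_dvd_iff_of_odd {d x : ℤ} (hd : Odd d) (hx : Even x) : 2 * d ∣ x ↔ d ∣ x :=
  ⟨dvd_of_mul_left_dvd, (Int.isCoprime_two_left.2 hd).mul_dvd hx.two_dvd⟩

theorem good_iff_good_two_mul_general (a b : ℤ)
    (haodd : Odd a) (hbodd : Odd b) (d : ℕ) (hd : 1 < d) (hdodd : Odd d)
    (hbd : IsCoprime b (d : ℤ)) :
    (Good a b d ↔ Good a b (2 * d)) ∧
      (Good a b d → ordAB a b (2 * d) = ordAB a b d ∧ Even (ordAB a b d)) := by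
  have hd' : Odd (d : ℤ) := by exact_mod_cast hdodd
  have hb2d : IsCoprime b ((2 * d : ℕ) : ℤ) := by
    push_cast
    exact (Int.isCoprime_two_right.2 hbodd).mul_right hbd
  have hsum (k : ℕ) : Even (a ^ k + b ^ k) := haodd.pow.add_odd hbodd.pow
  have hdiff (k : ℕ) : Even (a ^ k - b ^ k) := haodd.pow.sub_odd hbodd.pow
  refine ⟨?_, fun ⟨k, _, hk⟩ => ⟨?_, ?_⟩⟩
  · simp only [Good, Nat.cast_mul, Nat.cast_ofNat, Int.two_mul_dvd_iff_of_odd hd' (hsum _)]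
  · rw [ordAB, ordAB, orderOf_eq_orderOf_iff]
    intro m
    have h2dm := ZMod.intCast_mul_inv_pow_eq_intCast_iff hb2d a 1 m
    have hdm := ZMod.intCast_mul_inv_pow_eq_intCast_iff hbd a 1 m
    rw [Int.cast_one, one_mul] at h2dm hdm
    rw [h2dm, hdm, Nat.cast_mul, Nat.cast_ofNat, Int.two_mul_dvd_iff_of_odd hd' (hdiff m)]
  · have : Fact (2 < d) := ⟨by obtain ⟨m, rfl⟩ := hdodd; omega⟩
    refine even_orderOf_of_pow_eq_neg_one ZMod.neg_one_ne_one (k := k) ?_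
    simpa using (ZMod.intCast_mul_inv_pow_eq_intCast_iff hbd a (-1) k).2 (by simpa using hk)

theorem good_iff_good_two_mul (a b : ℤ) (ha : a ≠ 0) (hb : b ≠ 0)
    (haodd : Odd a) (hbodd : Odd b) (d : ℕ) (hd : 1 < d) (hdodd : Odd d)
    (hab : IsCoprime a b) (had : IsCoprime a (d : ℤ)) (hbd : IsCoprime b (d : ℤ)) :
    (Good a b d ↔ Good a b (2 * d)) ∧
      (Good a b d → ordAB a b (2 * d) = ordAB a b d ∧ Even (ordAB a b d)) :=
  good_iff_good_two_mul_general a b haodd hbodd d hd hdodd hbd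
end

section
/- Let a and b be coprime nonzero integers with ab even, and let ℓ = 2^β · d be a positive integer with d odd, β ≥ 0 and gcd(d, ab) = 1. Then ℓ ∈ G_{(a,b)} if and only if one of the following holds: (a) β = 0 and d = 1; (b) β = 0, d ≥ 3, and there exists s ≥ 1 such that 2^s || ord_p(a/b) for every prime p dividing d. -/
/-!
Since `a` and `b` are coprime and `ab` is even, `a^k + b^k` is odd, so `β = 0`. Put `x = a/b`.
For an odd prime power `q`, the only square roots of `1` modulo `q` are `±1`, so `q ∣ a^k + b^k`
iff `ord_q x ∣ 2k` but `ord_q x ∤ k`; in particular the exact power of `2` in `ord_q x` is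
`2 * 2^ν₂(k)`. Since `ord_p x ∣ ord_{p^e} x ∣ ord_p x · p^(e-1)`, the exact power of `2` in
`ord_{p^e} x` is the one in `ord_p x`. This gives the common `s` for all `p ∣ d`; conversely
`k = 2^(s-1) m`, with `m` the odd part of `ord_d x`, satisfies `ord_q x ∣ 2k`, `ord_q x ∤ k` for
every prime power `q ∣ d`.
-/

def ratioMod (a b : ℤ) (n : ℕ) : ZMod n := (a : ZMod n) * (b : ZMod n)⁻¹

section Ratio

variable {a b : ℤ} {n : ℕ}

lemma ordAB_eq_orderOf_ratioMod : ordAB a b n = orderOf (ratioMod a b n) := rfl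

lemma ratioMod_pow_eq_iff (hb : IsCoprime (n : ℤ) b) (k : ℕ) (c : ZMod n) :
    ratioMod a b n ^ k = c ↔ (a : ZMod n) ^ k = c * (b : ZMod n) ^ k := by
  obtain ⟨u, hu⟩ := (ZMod.coe_int_isUnit_iff_isCoprime b n).mpr hb
  rw [ratioMod, ← hu, ZMod.inv_coe_unit, mul_pow, ← Units.val_pow_eq_pow_val,
    ← Units.val_pow_eq_pow_val, inv_pow, Units.mul_inv_eq_iff_eq_mul]

lemma ordAB_dvd_iff (hb : IsCoprime (n : ℤ) b) {k : ℕ} :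
    ordAB a b n ∣ k ↔ (n : ℤ) ∣ a ^ k - b ^ k := by
  rw [ordAB_eq_orderOf_ratioMod, orderOf_dvd_iff_pow_eq_one, ratioMod_pow_eq_iff hb, one_mul,
    ← ZMod.intCast_eq_intCast_iff_dvd_sub]
  push_cast
  exact eq_comm

lemma ratioMod_pow_eq_neg_one_iff (hb : IsCoprime (n : ℤ) b) {k : ℕ} :
    ratioMod a b n ^ k = -1 ↔ (n : ℤ) ∣ a ^ k + b ^ k := by
  rw [ratioMod_pow_eq_iff hb, neg_one_mul, ← ZMod.intCast_zmod_eq_zero_iff_dvd,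
    eq_neg_iff_add_eq_zero]
  push_cast
  rfl

lemma ordAB_dvd_ordAB_of_dvd {m : ℕ} (hmn : m ∣ n) (hb : IsCoprime (n : ℤ) b) :
    ordAB a b m ∣ ordAB a b n :=
  (ordAB_dvd_iff (hb.of_isCoprime_of_dvd_left (Int.natCast_dvd_natCast.mpr hmn))).mpr
    ((Int.natCast_dvd_natCast.mpr hmn).trans ((ordAB_dvd_iff hb).mp dvd_rfl))

lemma ordAB_pow_succ_dvd (hb : IsCoprime (n : ℤ) b) (e : ℕ) :
    ordAB a b (n ^ (e + 1)) ∣ ordAB a b n * n ^ e := by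
  rw [ordAB_dvd_iff (by push_cast; exact hb.pow_left), pow_mul, pow_mul]
  exact_mod_cast dvd_sub_pow_of_dvd_sub ((ordAB_dvd_iff hb).mp dvd_rfl) e

lemma ordAB_ne_zero (hn : n ≠ 0) (ha : IsCoprime (n : ℤ) a) (hb : IsCoprime (n : ℤ) b) :
    ordAB a b n ≠ 0 := by
  have : NeZero n := ⟨hn⟩
  have hunit : IsUnit (ratioMod a b n) :=
    ((ZMod.coe_int_isUnit_iff_isCoprime a n).mpr ha).mul
      (ZMod.isUnit_inv ((ZMod.coe_int_isUnit_iff_isCoprime b n).mpr hb))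
  exact (orderOf_pos_iff.mpr hunit.isOfFinOrder).ne'

end Ratio

lemma two_pow_exact_dvd_orderOf_of_pow_eq_neg_one {M : Type*} [Monoid M] [HasDistribNeg M]
    (hM : (-1 : M) ≠ 1) {x : M} {r u : ℕ} (hu : Odd u) (hx : x ^ (2 ^ r * u) = -1) :
    2 ^ (r + 1) ∣ orderOf x ∧ ¬ 2 ^ (r + 2) ∣ orderOf x := by
  have hx2 : x ^ (2 ^ (r + 1) * u) = 1 := by
    rw [pow_succ, mul_assoc, mul_comm 2, ← mul_assoc, pow_mul, hx, neg_one_sq]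
  constructor
  · have hxu : orderOf (x ^ u) = 2 ^ (r + 1) := by
      refine orderOf_eq_prime_pow ?_ ?_ <;> rw [← pow_mul, mul_comm]
      · rwa [hx]
      · exact hx2
    exact hxu ▸ orderOf_pow_dvd u
  · intro h
    have h2u : 2 ^ (r + 1) * 2 ∣ 2 ^ (r + 1) * u :=
      pow_succ 2 (r + 1) ▸ h.trans (orderOf_dvd_of_pow_eq_one hx2)
    exact (Nat.not_even_iff_odd.mpr hu) (even_iff_two_dvd.mpr
      (Nat.dvd_of_mul_dvd_mul_left (by positivity) h2u))

lemma dvd_two_pow_mul_of_not_two_pow_dvd {c j m s : ℕ} (hc : c ∣ 2 ^ j * m)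
    (hcs : ¬ 2 ^ (s + 1) ∣ c) : c ∣ 2 ^ s * m := by
  obtain ⟨y, z, hy, hz, rfl⟩ := Nat.dvd_mul.mp hc
  obtain ⟨i, -, rfl⟩ := (Nat.dvd_prime_pow Nat.prime_two).mp hy
  have hi : i ≤ s := by
    by_contra! hi
    exact hcs ((pow_dvd_pow 2 hi).mul_right z)
  exact mul_dvd_mul (pow_dvd_pow 2 hi) hz

lemma two_pow_exact_dvd_of_dvd_of_dvd_mul_odd {m t q s : ℕ} (hmt : m ∣ t) (htm : t ∣ m * q)
    (hq : Odd q) (hm : 2 ^ s ∣ m ∧ ¬ 2 ^ (s + 1) ∣ m) :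
    2 ^ s ∣ t ∧ ¬ 2 ^ (s + 1) ∣ t := by
  refine ⟨hm.1.trans hmt, fun ht => hm.2 ?_⟩
  have hcop : Nat.Coprime (2 ^ (s + 1)) q :=
    Nat.Coprime.pow_left _ hq.coprime_two_left
  exact hcop.dvd_of_dvd_mul_right (ht.trans htm)

lemma ZMod.sq_eq_one_iff_of_prime_pow {p k : ℕ} (hp : p.Prime) (hp2 : p ≠ 2) (hk : k ≠ 0)
    {y : ZMod (p ^ k)} : y ^ 2 = 1 ↔ y = 1 ∨ y = -1 := by
  refine ⟨fun hy => ?_, by rintro (rfl | rfl) <;> simp⟩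
  obtain ⟨c, rfl⟩ := ZMod.intCast_surjective y
  have hunit :
      IsUnit ((c - 1 : ℤ) : ZMod (p ^ k)) ∨ IsUnit ((c + 1 : ℤ) : ZMod (p ^ k)) := by
    have hpZ : Prime (p : ℤ) := Nat.prime_iff_prime_int.mp hp
    simp only [ZMod.coe_int_isUnit_iff_isCoprime, Nat.cast_pow,
      IsCoprime.pow_left_iff (Nat.pos_of_ne_zero hk), hpZ.coprime_iff_not_dvd]
    by_contra! h
    have h2 : (p : ℤ) ∣ 2 := by simpa using dvd_sub h.2 h.1
    exact hp2 ((Nat.prime_dvd_prime_iff_eq hp Nat.prime_two).mp (by exact_mod_cast h2))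
  have hprod : ((c - 1 : ℤ) : ZMod (p ^ k)) * ((c + 1 : ℤ) : ZMod (p ^ k)) = 0 := by
    push_cast; linear_combination hy
  rcases hunit with h | h
  · have hc : ((c + 1 : ℤ) : ZMod (p ^ k)) = 0 := h.mul_right_eq_zero.mp hprod
    push_cast at hc
    exact Or.inr (by linear_combination hc)
  · have hc : ((c - 1 : ℤ) : ZMod (p ^ k)) = 0 := h.mul_left_eq_zero.mp hprod
    push_cast at hc
    exact Or.inl (by linear_combination hc)

lemma Int.odd_pow_add_pow_of_isCoprime {a b : ℤ} (hab : IsCoprime a b) (hev : Even (a * b))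
    {k : ℕ} (hk : k ≠ 0) : Odd (a ^ k + b ^ k) := by
  have hnot : ¬ (Even a ∧ Even b) := by
    rintro ⟨ha, hb⟩
    have h2 : IsUnit (2 : ℤ) := hab.isUnit_of_dvd' ha.two_dvd hb.two_dvd
    norm_num [Int.isUnit_iff] at h2
  rw [Int.odd_add, Int.odd_pow' hk, Int.even_pow' hk, ← Int.not_even_iff_odd]
  rcases Int.even_mul.mp hev with h | h <;> tauto

section Order

variable {a b : ℤ}

lemma two_pow_exact_dvd_ordAB_prime_pow {p s : ℕ} (hp : Odd p) (hb : IsCoprime (p : ℤ) b)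
    (h : 2 ^ s ∣ ordAB a b p ∧ ¬ 2 ^ (s + 1) ∣ ordAB a b p) (e : ℕ) :
    2 ^ s ∣ ordAB a b (p ^ (e + 1)) ∧ ¬ 2 ^ (s + 1) ∣ ordAB a b (p ^ (e + 1)) :=
  two_pow_exact_dvd_of_dvd_of_dvd_mul_odd
    (ordAB_dvd_ordAB_of_dvd (dvd_pow_self p e.succ_ne_zero) (by push_cast; exact hb.pow_left))
    (ordAB_pow_succ_dvd hb e) hp.pow h

lemma two_pow_exact_dvd_ordAB_of_dvd_pow_add_pow {p r u : ℕ} (hp : p.Prime) (hp2 : p ≠ 2)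
    (hb : IsCoprime (p : ℤ) b) (hu : Odd u)
    (h : (p : ℤ) ∣ a ^ (2 ^ r * u) + b ^ (2 ^ r * u)) :
    2 ^ (r + 1) ∣ ordAB a b p ∧ ¬ 2 ^ (r + 2) ∣ ordAB a b p := by
  have : Fact (2 < p) := ⟨lt_of_le_of_ne hp.two_le hp2.symm⟩
  exact two_pow_exact_dvd_orderOf_of_pow_eq_neg_one ZMod.neg_one_ne_one hu
    ((ratioMod_pow_eq_neg_one_iff hb).mpr h)

lemma prime_pow_dvd_pow_add_pow_of_ordAB_dvd {p e k : ℕ} (hp : p.Prime) (hp2 : p ≠ 2)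
    (hb : IsCoprime ((p ^ (e + 1) : ℕ) : ℤ) b) (h2 : ordAB a b (p ^ (e + 1)) ∣ 2 * k)
    (h1 : ¬ ordAB a b (p ^ (e + 1)) ∣ k) : ((p ^ (e + 1) : ℕ) : ℤ) ∣ a ^ k + b ^ k := by
  rw [← ratioMod_pow_eq_neg_one_iff hb]
  have hsq : (ratioMod a b (p ^ (e + 1)) ^ k) ^ 2 = 1 := by
    rw [← pow_mul, mul_comm]
    exact orderOf_dvd_iff_pow_eq_one.mp h2
  exact ((ZMod.sq_eq_one_iff_of_prime_pow hp hp2 e.succ_ne_zero).mp hsq).resolve_left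
    fun h => h1 (orderOf_dvd_of_pow_eq_one h)

lemma good_of_two_pow_exact_dvd_ordAB {d s : ℕ} (hd : Odd d) (hda : IsCoprime (d : ℤ) a)
    (hdb : IsCoprime (d : ℤ) b) (hs : s ≠ 0)
    (h : ∀ p : ℕ, p.Prime → p ∣ d →
      2 ^ s ∣ ordAB a b p ∧ ¬ 2 ^ (s + 1) ∣ ordAB a b p) :
    Good a b d := by
  obtain ⟨j, m, hm, ht⟩ := Nat.exists_eq_two_pow_mul_odd (ordAB_ne_zero hd.pos.ne' hda hdb)
  refine ⟨2 ^ (s - 1) * m, Nat.one_le_iff_ne_zero.mpr (by positivity [hm.pos]), ?_⟩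
  rw [Int.natCast_dvd, Nat.dvd_iff_prime_pow_dvd_dvd]
  rintro p (_ | e) hp hpd
  · simp
  have hpd' : p ∣ d := (dvd_pow_self p e.succ_ne_zero).trans hpd
  have hc := two_pow_exact_dvd_ordAB_prime_pow (hd.of_dvd_nat hpd')
    (hdb.of_isCoprime_of_dvd_left (Int.natCast_dvd_natCast.mpr hpd')) (h p hp hpd') e
  rw [← Int.natCast_dvd]
  apply prime_pow_dvd_pow_add_pow_of_ordAB_dvd hp (hd.ne_two_of_dvd_nat hpd')
    (hdb.of_isCoprime_of_dvd_left (Int.natCast_dvd_natCast.mpr hpd))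
  · rw [← mul_assoc, ← pow_succ', Nat.sub_add_cancel (Nat.one_le_iff_ne_zero.mpr hs)]
    exact dvd_two_pow_mul_of_not_two_pow_dvd (ht ▸ ordAB_dvd_ordAB_of_dvd hpd hdb) hc.2
  · intro hk
    have h2m : 2 ^ (s - 1) * 2 ∣ 2 ^ (s - 1) * m := by
      rw [← pow_succ, Nat.sub_add_cancel (Nat.one_le_iff_ne_zero.mpr hs)]
      exact hc.1.trans hk
    exact (Nat.not_even_iff_odd.mpr hm) (even_iff_two_dvd.mpr
      (Nat.dvd_of_mul_dvd_mul_left (by positivity) h2m))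

end Order

theorem good_char_even_case_general (a b : ℤ) (hab : IsCoprime a b)
    (habeven : Even (a * b)) (β d : ℕ) (hdodd : Odd d)
    (hdab : IsCoprime (d : ℤ) (a * b)) :
    Good a b (2 ^ β * d) ↔
      ((β = 0 ∧ d = 1) ∨
       (β = 0 ∧ 3 ≤ d ∧ ∃ s : ℕ, 1 ≤ s ∧ ∀ p : ℕ, p.Prime → p ∣ d →
          2 ^ s ∣ ordAB a b p ∧ ¬ 2 ^ (s + 1) ∣ ordAB a b p)) := by
  have hdb : IsCoprime (d : ℤ) b := hdab.of_mul_right_right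
  constructor
  · rintro ⟨k, hk, hdvd⟩
    obtain rfl : β = 0 := by
      by_contra hβ
      have h2 : (2 : ℤ) ∣ a ^ k + b ^ k :=
        (Int.natCast_dvd_natCast.mpr (dvd_mul_of_dvd_left (dvd_pow_self 2 hβ) d)).trans hdvd
      exact Int.not_even_iff_odd.mpr (Int.odd_pow_add_pow_of_isCoprime hab habeven (by omega))
        (even_iff_two_dvd.mpr h2)
    rw [pow_zero, one_mul] at hdvd
    rcases eq_or_ne d 1 with rfl | hd1
    · exact Or.inl ⟨rfl, rfl⟩
    obtain ⟨r, u, hu, rfl⟩ := Nat.exists_eq_two_pow_mul_odd (Nat.one_le_iff_ne_zero.mp hk)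
    refine Or.inr ⟨rfl, ?_, r + 1, by omega, fun p hp hpd => ?_⟩
    · obtain ⟨j, rfl⟩ := hdodd
      omega
    · exact two_pow_exact_dvd_ordAB_of_dvd_pow_add_pow hp (hdodd.ne_two_of_dvd_nat hpd)
        (hdb.of_isCoprime_of_dvd_left (Int.natCast_dvd_natCast.mpr hpd)) hu
        ((Int.natCast_dvd_natCast.mpr hpd).trans hdvd)
  · rintro (⟨rfl, rfl⟩ | ⟨rfl, -, s, hs, hsp⟩)
    · exact ⟨1, le_rfl, by simp⟩
    · simpa using good_of_two_pow_exact_dvd_ordAB hdodd hdab.of_mul_right_left hdb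
        (by omega) hsp

theorem good_char_even_case (a b : ℤ) (ha : a ≠ 0) (hb : b ≠ 0) (hab : IsCoprime a b)
    (habeven : Even (a * b)) (β d : ℕ) (hdodd : Odd d) (hd : 0 < d)
    (hdab : IsCoprime (d : ℤ) (a * b)) :
    Good a b (2 ^ β * d) ↔
      ((β = 0 ∧ d = 1) ∨
       (β = 0 ∧ 3 ≤ d ∧ ∃ s : ℕ, 1 ≤ s ∧ ∀ p : ℕ, p.Prime → p ∣ d →
          2 ^ s ∣ ordAB a b p ∧ ¬ 2 ^ (s + 1) ∣ ordAB a b p)) :=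
  good_char_even_case_general a b hab habeven β d hdodd hdab
end

section
/- Let a and b be coprime nonzero integers. Then G_{(a,b)} = OG_{(a,b)} ∪ EG_{(a,b)}. Moreover, if ab is even then OG_{(a,b)} ∩ EG_{(a,b)} = {1}, and if ab is odd then OG_{(a,b)} ∩ EG_{(a,b)} = {1, 2}. -/
/-- `G_{(a,b)}`: the set of positive integers dividing `a^k + b^k` for some `k ≥ 1`. -/
def GoodSet (a b : ℤ) : Set ℕ :=
  {d | 0 < d ∧ ∃ k : ℕ, 1 ≤ k ∧ (d : ℤ) ∣ a ^ k + b ^ k}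

/-- `OG_{(a,b)}`: the set of positive integers dividing `a^k + b^k` for some odd `k ≥ 1`. -/
def OddlyGoodSet (a b : ℤ) : Set ℕ :=
  {d | 0 < d ∧ ∃ k : ℕ, Odd k ∧ 1 ≤ k ∧ (d : ℤ) ∣ a ^ k + b ^ k}

/-- `EG_{(a,b)}`: the set of positive integers dividing `a^k + b^k` for some even `k ≥ 2`. -/
def EvenlyGoodSet (a b : ℤ) : Set ℕ :=
  {d | 0 < d ∧ ∃ k : ℕ, Even k ∧ 2 ≤ k ∧ (d : ℤ) ∣ a ^ k + b ^ k}

lemma key_dvd_two (a b : ℤ) (hab : IsCoprime a b) {d : ℕ}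
    (h1 : d ∈ OddlyGoodSet a b) (h2 : d ∈ EvenlyGoodSet a b) : d ∣ 2 := by
  obtain ⟨hd, m, hm, hm1, hdm⟩ := h1
  obtain ⟨-, n, hn, hn2, hdn⟩ := h2
  have h3 : (d : ℤ) ∣ a ^ (m * n) - b ^ (m * n) := by
    refine hdm.trans ?_
    have h := sub_dvd_pow_sub_pow (a ^ m) (-(b ^ m)) n
    rw [sub_neg_eq_add, hn.neg_pow, ← pow_mul, ← pow_mul] at h
    exact h
  have h4 : (d : ℤ) ∣ a ^ (m * n) + b ^ (m * n) := by
    refine hdn.trans ?_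
    have h := Odd.add_dvd_pow_add_pow (a ^ n) (b ^ n) hm
    rw [← pow_mul, ← pow_mul, Nat.mul_comm n m] at h
    exact h
  have h5 : (d : ℤ) ∣ 2 * a ^ (m * n) := by
    have h := dvd_add h4 h3
    have e : a ^ (m * n) + b ^ (m * n) + (a ^ (m * n) - b ^ (m * n)) = 2 * a ^ (m * n) := by
      ring
    rwa [e] at h
  have hcop : IsCoprime ((d : ℤ)) (a ^ (m * n)) := by
    have h6 : IsCoprime (b ^ m + a ^ m * 1) (a ^ m) :=
      (hab.symm.pow).add_mul_left_left 1
    rw [mul_one, add_comm] at h6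
    have h7 : IsCoprime ((d : ℤ)) (a ^ m) := IsCoprime.of_isCoprime_of_dvd_left h6 hdm
    rw [pow_mul]
    exact h7.pow_right
  have : (d : ℤ) ∣ 2 := hcop.dvd_of_dvd_mul_right h5
  exact_mod_cast this

theorem goodSet_eq_union (a b : ℤ) (ha : a ≠ 0) (hb : b ≠ 0) (hab : IsCoprime a b) :
    GoodSet a b = OddlyGoodSet a b ∪ EvenlyGoodSet a b ∧
      (Even (a * b) → OddlyGoodSet a b ∩ EvenlyGoodSet a b = {1}) ∧
      (Odd (a * b) → OddlyGoodSet a b ∩ EvenlyGoodSet a b = {1, 2}) := by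
  have h1og : (1 : ℕ) ∈ OddlyGoodSet a b := ⟨one_pos, 1, odd_one, le_refl 1, one_dvd _⟩
  have h1eg : (1 : ℕ) ∈ EvenlyGoodSet a b := ⟨one_pos, 2, even_two, le_refl 2, one_dvd _⟩
  refine ⟨?_, ?_, ?_⟩
  · ext d
    constructor
    · rintro ⟨hd, k, hk1, hdk⟩
      rcases Nat.even_or_odd k with he | ho
      · exact Or.inr ⟨hd, k, he, by obtain ⟨t, ht⟩ := he; omega, hdk⟩
      · exact Or.inl ⟨hd, k, ho, hk1, hdk⟩
    · rintro (⟨hd, k, _, hk1, hdk⟩ | ⟨hd, k, _, hk2, hdk⟩)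
      · exact ⟨hd, k, hk1, hdk⟩
      · exact ⟨hd, k, by omega, hdk⟩
  · intro heven
    ext d
    simp only [Set.mem_inter_iff, Set.mem_singleton_iff]
    constructor
    · rintro ⟨hog, heg⟩
      have hd2 : d ∣ 2 := key_dvd_two a b hab hog heg
      have hd0 : 0 < d := hog.1
      have hdle : d ≤ 2 := Nat.le_of_dvd two_pos hd2
      -- rule out d = 2
      interval_cases d
      · rfl
      · exfalso
        obtain ⟨-, k, _, hk1, hdk⟩ := hog
        have hodd : Odd (a ^ k + b ^ k) := by
          rcases Int.even_mul.mp heven with hea | heb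
          · have hob : Odd b := by
              by_contra h
              rw [Int.not_odd_iff_even] at h
              have hu := hab.isUnit_of_dvd' hea.two_dvd h.two_dvd
              rw [Int.isUnit_iff] at hu
              omega
            exact Even.add_odd (Int.even_pow.mpr ⟨hea, by omega⟩) (hob.pow)
          · have hoa : Odd a := by
              by_contra h
              rw [Int.not_odd_iff_even] at h
              have hu := hab.isUnit_of_dvd' h.two_dvd heb.two_dvd
              rw [Int.isUnit_iff] at hu
              omega
            exact Odd.add_even (hoa.pow) (Int.even_pow.mpr ⟨heb, by omega⟩)
        have : (2 : ℤ) ∣ a ^ k + b ^ k := by exact_mod_cast hdk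
        rcases hodd with ⟨t, ht⟩
        omega
    · rintro rfl
      exact ⟨h1og, h1eg⟩
  · intro hodd
    obtain ⟨hoa, hob⟩ := Int.odd_mul.mp hodd
    have h2og : (2 : ℕ) ∈ OddlyGoodSet a b := by
      refine ⟨two_pos, 1, odd_one, le_refl 1, ?_⟩
      have : Even (a ^ 1 + b ^ 1) := (hoa.pow).add_odd (hob.pow)
      rcases this with ⟨t, ht⟩
      exact ⟨t, by push_cast; linarith⟩
    have h2eg : (2 : ℕ) ∈ EvenlyGoodSet a b := by
      refine ⟨two_pos, 2, even_two, le_refl 2, ?_⟩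
      have : Even (a ^ 2 + b ^ 2) := (hoa.pow).add_odd (hob.pow)
      rcases this with ⟨t, ht⟩
      exact ⟨t, by push_cast; linarith⟩
    ext d
    simp only [Set.mem_inter_iff, Set.mem_insert_iff, Set.mem_singleton_iff]
    constructor
    · rintro ⟨hog, heg⟩
      have hd2 : d ∣ 2 := key_dvd_two a b hab hog heg
      have hd0 : 0 < d := hog.1
      have hdle : d ≤ 2 := Nat.le_of_dvd two_pos hd2
      interval_cases d
      · exact Or.inl rfl
      · exact Or.inr rfl
    · rintro (rfl | rfl)
      · exact ⟨h1og, h1eg⟩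
      · exact ⟨h2og, h2eg⟩
end

section
/- Let a_1, a_2, …, a_t be positive integers. Then the system of congruences x ≡ a_1 (mod 2a_1), x ≡ a_2 (mod 2a_2), …, x ≡ a_t (mod 2a_t) has an integer solution x if and only if there exists an integer s ≥ 0 such that 2^s || a_i for all i = 1, 2, …, t. -/
theorem congruence_system_solvable_iff (t : ℕ) (a : Fin t → ℕ) (ha : ∀ i, 0 < a i) :
    (∃ x : ℤ, ∀ i, x ≡ (a i : ℤ) [ZMOD (2 * (a i : ℤ))]) ↔
      ∃ s : ℕ, ∀ i, 2 ^ s ∣ a i ∧ ¬ 2 ^ (s + 1) ∣ a i := by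
  constructor
  · rintro ⟨x, hx⟩
    rcases Nat.eq_zero_or_pos t with ht | ht
    · subst ht; exact ⟨0, fun i => i.elim0⟩
    · have key : ∀ i, (x.natAbs).factorization 2 = (a i).factorization 2 := by
        intro i
        obtain ⟨k, hk⟩ := (hx i).dvd
        have hx_eq : x = (a i : ℤ) * (1 - 2 * k) := by linarith [hk]
        have hnat : x.natAbs = a i * (1 - 2 * k).natAbs := by
          rw [hx_eq, Int.natAbs_mul, Int.natAbs_natCast]
        have hodd : Odd (1 - 2 * k).natAbs := by
          rw [Int.natAbs_odd]; exact ⟨-k, by ring⟩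
        have hnd : ¬ (2 ∣ (1 - 2 * k).natAbs) := by
          rw [Nat.two_dvd_ne_zero]; exact Nat.odd_iff.mp hodd
        rw [hnat, Nat.factorization_mul (ha i).ne' hodd.pos.ne',
          Finsupp.add_apply, Nat.factorization_eq_zero_of_not_dvd hnd, add_zero]
      refine ⟨x.natAbs.factorization 2, fun i => ?_⟩
      rw [key i]
      exact ⟨Nat.ordProj_dvd _ 2,
        Nat.pow_succ_factorization_not_dvd (ha i).ne' Nat.prime_two⟩
  · rintro ⟨s, hs⟩
    classical
    set b : Fin t → ℕ := fun j => a j / 2 ^ s with hb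
    have hab : ∀ j, a j = 2 ^ s * b j := fun j =>
      (Nat.mul_div_cancel' (hs j).1).symm
    have hbodd : ∀ j, ¬ (2 ∣ b j) := by
      intro j hdvd
      obtain ⟨c, hc⟩ := hdvd
      exact (hs j).2 ⟨c, by rw [hab j, hc]; ring⟩
    refine ⟨(2 ^ s : ℤ) * ∏ j, (b j : ℤ), fun i => ?_⟩
    rw [Int.modEq_iff_dvd]
    have hsplit : (2 ^ s : ℤ) * ∏ j, (b j : ℤ)
        = (a i : ℤ) * ∏ j ∈ Finset.univ.erase i, (b j : ℤ) := by
      rw [hab i]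
      push_cast
      rw [← Finset.mul_prod_erase _ _ (Finset.mem_univ i)]
      ring
    rw [hsplit]
    have hm : ¬ ((2 : ℤ) ∣ ∏ j ∈ Finset.univ.erase i, (b j : ℤ)) := by
      rw [Int.prime_two.dvd_finset_prod_iff]
      rintro ⟨j, -, hj⟩
      exact hbodd j (by exact_mod_cast hj)
    have h2 : (2 : ℤ) ∣ (1 - ∏ j ∈ Finset.univ.erase i, (b j : ℤ)) := by
      rcases Int.even_or_odd (∏ j ∈ Finset.univ.erase i, (b j : ℤ)) with he | ho
      · exact absurd he.two_dvd hm
      · obtain ⟨c, hc⟩ := ho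
        exact ⟨-c, by rw [hc]; ring⟩
    obtain ⟨c, hc⟩ := h2
    exact ⟨c, by rw [mul_comm (2:ℤ) (a i : ℤ), mul_assoc, ← hc]; ring⟩
end

section
/- Let a and b be coprime nonzero integers and let d > 1 be an odd integer with gcd(d, ab) = 1. Then d ∈ OG_{(a,b)} if and only if 2 || ord_p(a/b) for every prime p dividing d. -/
/-!
Modulo an odd prime `p ∤ b`, `p ∣ a^k + b^k` says `(a/b)^k = -1`, and since `-1` is the only
square root of `1` other than `1`, an odd `k` with `u^k = -1` exists exactly when `2 ‖ ord u`.
Goodness lifts from `p` to `p^e` because `x ≡ y (mod p)` gives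
`x^(p^(e-1)) ≡ y^(p^(e-1)) (mod p^e)`, and it passes to coprime products with the product of
the exponents, since `x + y ∣ x^k + y^k` for odd `k`.
-/

/-- `d ∈ OG_{(a,b)}`: `d` divides `a^k + b^k` for some odd integer `k ≥ 1`. -/
def OddlyGood (a b : ℤ) (d : ℕ) : Prop :=
  ∃ k : ℕ, Odd k ∧ 1 ≤ k ∧ (d : ℤ) ∣ a ^ k + b ^ k

theorem exists_odd_pow_eq_neg_one_iff {R : Type*} [Ring R] [NoZeroDivisors R]
    (hR : (-1 : R) ≠ 1) (u : R) :
    (∃ k, Odd k ∧ u ^ k = -1) ↔ 2 ∣ orderOf u ∧ ¬ 2 ^ 2 ∣ orderOf u := by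
  constructor
  · rintro ⟨k, hk, huk⟩
    have h2k : orderOf u ∣ k * 2 := orderOf_dvd_of_pow_eq_one (by rw [pow_mul, huk, neg_one_sq])
    have hk' : ¬ orderOf u ∣ k := fun h => hR (huk ▸ orderOf_dvd_iff_pow_eq_one.mp h)
    refine ⟨?_, fun h4 => ?_⟩
    · by_contra h2
      exact hk' ((Nat.prime_two.coprime_iff_not_dvd.mpr h2).symm.dvd_of_dvd_mul_right h2k)
    · obtain ⟨t, ht⟩ := h4.trans h2k
      obtain ⟨j, rfl⟩ := hk
      omega
  · rintro ⟨⟨k, hk⟩, h4⟩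
    have hk0 : k ≠ 0 := by rintro rfl; exact h4 (hk ▸ dvd_zero _)
    have hkodd : Odd k := Nat.odd_iff.mpr (by omega)
    have hsq : (u ^ k) ^ 2 = 1 := by rw [← pow_mul, mul_comm, ← hk, pow_orderOf_eq_one]
    have hne : u ^ k ≠ 1 := fun h =>
      absurd (Nat.le_of_dvd (Nat.pos_of_ne_zero hk0) (orderOf_dvd_of_pow_eq_one h)) (by omega)
    exact ⟨k, hkodd, (sq_eq_one_iff.mp hsq).resolve_left hne⟩

theorem intCast_dvd_pow_add_pow_iff {p : ℕ} [Fact p.Prime] {a b : ℤ} (hb : ¬ (p : ℤ) ∣ b)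
    (k : ℕ) : (p : ℤ) ∣ a ^ k + b ^ k ↔ ((a : ZMod p) * (b : ZMod p)⁻¹) ^ k = -1 := by
  have hb0 : (b : ZMod p) ≠ 0 := by rwa [Ne, ZMod.intCast_zmod_eq_zero_iff_dvd]
  rw [← ZMod.intCast_zmod_eq_zero_iff_dvd, ← div_eq_mul_inv, div_pow,
    div_eq_iff (pow_ne_zero k hb0), neg_one_mul, ← add_eq_zero_iff_eq_neg]
  push_cast
  rfl

theorem Odd.dvd_pow_mul_add_pow_mul {R : Type*} [CommRing R] {c x y : R} {i j : ℕ} (hi : Odd i)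
    (hc : c ∣ x ^ j + y ^ j) : c ∣ x ^ (j * i) + y ^ (j * i) := by
  rw [pow_mul, pow_mul]
  exact hc.trans (Odd.add_dvd_pow_add_pow _ _ hi)

namespace OddlyGood

variable {a b : ℤ}

theorem of_dvd {d e : ℕ} (hde : e ∣ d) (h : OddlyGood a b d) : OddlyGood a b e :=
  let ⟨k, hk, hk1, hdvd⟩ := h
  ⟨k, hk, hk1, (Int.natCast_dvd_natCast.mpr hde).trans hdvd⟩

theorem prime_pow {p : ℕ} (hp : Odd p) (h : OddlyGood a b p) (e : ℕ) :
    OddlyGood a b (p ^ e) := by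
  obtain ⟨k, hk, -, hdvd⟩ := h
  have hpe : Odd (p ^ e) := hp.pow
  refine ⟨k * p ^ e, hk.mul hpe, (hk.mul hpe).pos, ?_⟩
  have hlift := dvd_sub_pow_of_dvd_sub (a := a ^ k) (b := -b ^ k) (by rwa [sub_neg_eq_add]) e
  rw [hpe.neg_pow, sub_neg_eq_add, ← pow_mul, ← pow_mul] at hlift
  exact_mod_cast (pow_dvd_pow (p : ℤ) e.le_succ).trans hlift

theorem mul {m n : ℕ} (hmn : m.Coprime n) (hm : OddlyGood a b m) (hn : OddlyGood a b n) :
    OddlyGood a b (m * n) := by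
  obtain ⟨k, hk, -, hmk⟩ := hm
  obtain ⟨l, hl, -, hnl⟩ := hn
  refine ⟨k * l, hk.mul hl, (hk.mul hl).pos, ?_⟩
  push_cast
  exact hmn.isCoprime.mul_dvd (hl.dvd_pow_mul_add_pow_mul hmk)
    (mul_comm l k ▸ hk.dvd_pow_mul_add_pow_mul hnl)

theorem of_forall_prime_dvd {d : ℕ} (hd : Odd d)
    (h : ∀ p, p.Prime → p ∣ d → OddlyGood a b p) : OddlyGood a b d := by
  induction d using Nat.recOnPosPrimePosCoprime with
  | prime_pow p e hp he =>
    have hpe : p ∣ p ^ e := dvd_pow_self p he.ne'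
    exact prime_pow (hd.of_dvd_nat hpe) (h p hp hpe) e
  | zero => exact absurd hd (by decide)
  | one => exact ⟨1, odd_one, le_rfl, by simp⟩
  | coprime m n _ _ hmn ihm ihn =>
    exact mul hmn (ihm (Nat.odd_mul.mp hd).1 fun p hp hpm => h p hp (hpm.mul_right n))
      (ihn (Nat.odd_mul.mp hd).2 fun p hp hpn => h p hp (hpn.mul_left m))

theorem iff_forall_prime_dvd {d : ℕ} (hd : Odd d) :
    OddlyGood a b d ↔ ∀ p, p.Prime → p ∣ d → OddlyGood a b p :=
  ⟨fun h _ _ hpd => h.of_dvd hpd, of_forall_prime_dvd hd⟩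

theorem prime_iff {p : ℕ} (hp : p.Prime) (hpodd : Odd p) (hb : ¬ (p : ℤ) ∣ b) :
    OddlyGood a b p ↔ 2 ∣ ordAB a b p ∧ ¬ 2 ^ 2 ∣ ordAB a b p := by
  have : Fact p.Prime := ⟨hp⟩
  have : Fact (2 < p) :=
    ⟨hp.two_le.lt_of_ne fun h => by subst h; exact absurd hpodd (by decide)⟩
  rw [ordAB, ← exists_odd_pow_eq_neg_one_iff ZMod.neg_one_ne_one]
  simp only [OddlyGood, ← intCast_dvd_pow_add_pow_iff hb]
  exact exists_congr fun k =>
    ⟨fun ⟨hk, _, h⟩ => ⟨hk, h⟩, fun ⟨hk, h⟩ => ⟨hk, hk.pos, h⟩⟩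

end OddlyGood

theorem oddlyGood_iff_general (a b : ℤ)
    (d : ℕ) (hdodd : Odd d) (hdab : IsCoprime (d : ℤ) (a * b)) :
    OddlyGood a b d ↔ ∀ p : ℕ, p.Prime → p ∣ d →
      2 ∣ ordAB a b p ∧ ¬ 2 ^ 2 ∣ ordAB a b p := by
  rw [OddlyGood.iff_forall_prime_dvd hdodd]
  refine forall₂_congr fun p hp => forall_congr' fun hpd => ?_
  have hpb : ¬ (p : ℤ) ∣ b := fun hpb =>
    Nat.prime_iff_prime_int.mp hp |>.not_isUnit <|
      hdab.isUnit_of_dvd' (Int.natCast_dvd_natCast.mpr hpd) (hpb.mul_left a)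
  exact OddlyGood.prime_iff hp (hdodd.of_dvd_nat hpd) hpb

theorem oddlyGood_iff (a b : ℤ) (ha : a ≠ 0) (hb : b ≠ 0) (hab : IsCoprime a b)
    (d : ℕ) (hd : 1 < d) (hdodd : Odd d) (hdab : IsCoprime (d : ℤ) (a * b)) :
    OddlyGood a b d ↔ ∀ p : ℕ, p.Prime → p ∣ d →
      2 ∣ ordAB a b p ∧ ¬ 2 ^ 2 ∣ ordAB a b p :=
  oddlyGood_iff_general a b d hdodd hdab
end

section
/- Let a and b be coprime nonzero odd integers and let d > 1 be an odd integer. Then: (1) d ∈ OG_{(a,b)} if and only if 2d ∈ OG_{(a,b)}; (2) for every integer β ≥ 2, 2^β · d ∈ OG_{(a,b)} if and only if 2^β · d ∈ G_{(a,b)}. -/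
lemma aux_odd_sq (x : ℤ) (hx : Odd x) : (4 : ℤ) ∣ x ^ 2 - 1 := by
  obtain ⟨t, rfl⟩ := hx
  exact ⟨t ^ 2 + t, by ring⟩

theorem oddlyGood_two_mul_and_two_pow (a b : ℤ) (ha : a ≠ 0) (hb : b ≠ 0)
    (hab : IsCoprime a b) (haodd : Odd a) (hbodd : Odd b)
    (d : ℕ) (hd : 1 < d) (hdodd : Odd d) :
    (OddlyGood a b d ↔ OddlyGood a b (2 * d)) ∧
      (∀ β : ℕ, 2 ≤ β → (OddlyGood a b (2 ^ β * d) ↔ Good a b (2 ^ β * d))) := by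
  constructor
  · constructor
    · rintro ⟨k, hk, hk1, hdvd⟩
      refine ⟨k, hk, hk1, ?_⟩
      have heven : (2 : ℤ) ∣ a ^ k + b ^ k := (haodd.pow.add_odd hbodd.pow).two_dvd
      have hcop : IsCoprime (2 : ℤ) (d : ℤ) := by
        have h2 : Nat.Coprime 2 d := Nat.coprime_two_left.mpr hdodd
        exact_mod_cast Nat.isCoprime_iff_coprime.mpr h2
      have := hcop.mul_dvd heven hdvd
      push_cast
      exact this
    · rintro ⟨k, hk, hk1, hdvd⟩
      refine ⟨k, hk, hk1, dvd_trans ?_ hdvd⟩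
      push_cast
      exact dvd_mul_left _ _
  · intro β hβ
    constructor
    · rintro ⟨k, _, hk1, hdvd⟩
      exact ⟨k, hk1, hdvd⟩
    · rintro ⟨k, hk1, hdvd⟩
      have hkodd : Odd k := by
        by_contra hodd
        obtain ⟨m, rfl⟩ := Nat.not_odd_iff_even.mp hodd
        have h4 : (4 : ℤ) ∣ a ^ (m + m) + b ^ (m + m) := by
          refine dvd_trans ?_ hdvd
          have : ((4 : ℤ)) ∣ ((2 : ℤ) ^ β) := by
            calc (4 : ℤ) = 2 ^ 2 := by norm_num
            _ ∣ 2 ^ β := pow_dvd_pow 2 hβ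
          push_cast
          exact this.mul_right _
        have ha2 : (4 : ℤ) ∣ (a ^ m) ^ 2 - 1 := aux_odd_sq _ haodd.pow
        have hb2 : (4 : ℤ) ∣ (b ^ m) ^ 2 - 1 := aux_odd_sq _ hbodd.pow
        have heq : a ^ (m + m) + b ^ (m + m) = (a ^ m) ^ 2 + (b ^ m) ^ 2 := by
          ring
        rw [heq] at h4
        omega
      exact ⟨k, hkodd, hk1, hdvd⟩
end

section
/- Let p be a prime, let ν be a positive integer, let A be a finite additive abelian group whose order is not divisible by p, and let a ∈ A. Then -a belongs to the p^ν-cyclotomic class S_{p^ν}(a) (i.e., there exists an integer i ≥ 0 such that p^{νi}·a = -a in A) if and only if the order of a in A belongs to G_{(p^ν,1)}. -/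
theorem neg_mem_cyclotomicClass_iff (p : ℕ) (hp : p.Prime) (ν : ℕ) (hν : 1 ≤ ν)
    (A : Type*) [AddCommGroup A] [Fintype A] (hpA : ¬ p ∣ Fintype.card A) (a : A) :
    (∃ i : ℕ, ((p ^ ν) ^ i) • a = -a) ↔ Good ((p : ℤ) ^ ν) 1 (addOrderOf a) := by
  have key : ∀ n : ℕ, (n • a = -a) ↔ addOrderOf a ∣ n + 1 := by
    intro n
    rw [eq_neg_iff_add_eq_zero, ← succ_nsmul, addOrderOf_dvd_iff_nsmul_eq_zero]
  constructor
  · rintro ⟨i, hi⟩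
    rcases Nat.eq_zero_or_pos i with rfl | hi1
    · have h2 : addOrderOf a ∣ 2 := by simpa using (key _).mp hi
      refine ⟨1, le_refl 1, ?_⟩
      rcases (Nat.dvd_prime Nat.prime_two).mp h2 with h1 | h1
      · simp [h1]
      · have hp2 : p ≠ 2 := by
          rintro rfl
          exact hpA (h1 ▸ addOrderOf_dvd_card)
        have hpodd : Odd (p ^ ν) := (hp.odd_of_ne_two hp2).pow
        have h2d : 2 ∣ p ^ ν + 1 := hpodd.add_one.two_dvd
        rw [h1, pow_one]
        exact_mod_cast h2d
    · refine ⟨i, hi1, ?_⟩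
      have hd := (key _).mp hi
      have : ((p ^ ν) ^ i : ℤ) + 1 = (((p ^ ν) ^ i + 1 : ℕ) : ℤ) := by push_cast; ring
      rw [show ((p:ℤ) ^ ν) ^ i = (((p ^ ν) ^ i : ℕ) : ℤ) by push_cast; ring, one_pow]
      exact_mod_cast hd
  · rintro ⟨k, hk, hdvd⟩
    refine ⟨k, (key _).mpr ?_⟩
    have : (addOrderOf a : ℤ) ∣ ((p ^ ν) ^ k + 1 : ℕ) := by
      push_cast
      simpa using hdvd
    exact_mod_cast this
end
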